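/- arXiv:0901.1853 — 3 statements merged into one kernel-verified Lean document; each statement's English description precedes it below -/
import Mathlib

section
/- Let p ∈ (0, 1/4], ε > 0 and n be such that ℓ = (1 − 4p + ε/2)n, d = 2pn − εn/8 and εn/4 are positive integers. Let V ⊆ {0,1}^n be a set of binary words that all agree on their first ℓ coordinates and satisfy |V| ≥ 32p/ε. Then the number of unordered pairs {x, x'} ⊆ V with x ≠ x' and Hamming distance d_H(x, x') < d is at least (ε/(64p)) · |V|². Consequently, two independent uniformly random elements x, x' of V satisfy x ≠ x' and d_H(x, x') < 2pn − εn/8 with probability at least ε/(64p). (Claim 2: the graph on consistent codewords with edges between words at Hamming distance less than 2pn − εn/8 has large edge density.) -/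
open Finset


lemma twoU {n d : ℕ} (V : Finset (Fin n → Bool)) :
    ((V ×ˢ V).filter (fun q => q.1 ≠ q.2 ∧ hammingDist q.1 q.2 < d)).card ≤
    2 * ((V.powersetCard 2).filter
        (fun s => ∀ x ∈ s, ∀ y ∈ s, x ≠ y → hammingDist x y < d)).card := by
  classical
  set P := (V ×ˢ V).filter (fun q => q.1 ≠ q.2 ∧ hammingDist q.1 q.2 < d) with hP
  set U := (V.powersetCard 2).filter
      (fun s => ∀ x ∈ s, ∀ y ∈ s, x ≠ y → hammingDist x y < d) with hU
  have hmap : ∀ q ∈ P, ({q.1, q.2} : Finset (Fin n → Bool)) ∈ U := by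
    rintro ⟨x, y⟩ hq
    simp only [hP, mem_filter, mem_product] at hq
    obtain ⟨⟨hx, hy⟩, hne, hlt⟩ := hq
    simp only [hU, mem_filter, mem_powersetCard]
    refine ⟨⟨?_, ?_⟩, ?_⟩
    · intro a ha; simp only [mem_insert, mem_singleton] at ha
      rcases ha with h | h <;> subst h <;> assumption
    · exact card_pair hne
    · intro a ha b hb hab
      simp only [mem_insert, mem_singleton] at ha hb
      rcases ha with h | h <;> rcases hb with h' | h' <;> subst h <;> subst h'
      · exact absurd rfl hab
      · exact hlt
      · rw [hammingDist_comm]; exact hlt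
      · exact absurd rfl hab
  rw [Finset.card_eq_sum_card_fiberwise hmap]
  calc ∑ s ∈ U, (P.filter (fun q => ({q.1, q.2} : Finset _) = s)).card
      ≤ ∑ _s ∈ U, 2 := by
        apply Finset.sum_le_sum
        intro s hs
        have hs2 : s.card = 2 := (mem_powersetCard.mp (mem_filter.mp hs).1).2
        have hsub : (P.filter (fun q => ({q.1, q.2} : Finset _) = s)) ⊆ s.offDiag := by
          intro q hq
          simp only [mem_filter, hP, mem_product] at hq
          obtain ⟨⟨_, hne, _⟩, hqs⟩ := hq
          rw [Finset.mem_offDiag]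
          refine ⟨?_, ?_, hne⟩ <;> rw [← hqs] <;> simp
        calc _ ≤ s.offDiag.card := Finset.card_le_card hsub
          _ = 2 := by rw [Finset.offDiag_card, hs2]
    _ = 2 * U.card := by rw [Finset.sum_const, smul_eq_mul, mul_comm]
open Finset

lemma sumB {n ℓ : ℕ} (V : Finset (Fin n → Bool))
    (hagree : ∀ x ∈ V, ∀ y ∈ V, ∀ i : Fin n, i.1 < ℓ → x i = y i) :
    2 * ∑ q ∈ V ×ˢ V, hammingDist q.1 q.2 ≤ (n - ℓ) * V.card ^ 2 := by
  classical
  have hdist : ∀ q : (Fin n → Bool) × (Fin n → Bool),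
      hammingDist q.1 q.2 = ∑ i : Fin n, (if q.1 i ≠ q.2 i then 1 else 0) := by
    intro q
    show (Finset.univ.filter fun i => q.1 i ≠ q.2 i).card = _
    rw [Finset.card_filter]
  have hIco : (Finset.range n).filter (fun i => ¬ i < ℓ) = Finset.Ico ℓ n := by
    ext j; simp; omega
  calc 2 * ∑ q ∈ V ×ˢ V, hammingDist q.1 q.2
      = ∑ i : Fin n, 2 * ∑ q ∈ V ×ˢ V, (if q.1 i ≠ q.2 i then 1 else 0) := by
        simp_rw [hdist]
        rw [Finset.sum_comm, Finset.mul_sum]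
    _ ≤ ∑ i : Fin n, (if i.1 < ℓ then 0 else V.card ^ 2) := by
        apply Finset.sum_le_sum
        intro i _
        by_cases hi : i.1 < ℓ
        · simp only [hi, if_true]
          have : ∀ q ∈ V ×ˢ V, (if q.1 i ≠ q.2 i then 1 else 0) = 0 := by
            rintro ⟨x, y⟩ hq
            rw [mem_product] at hq
            simp [hagree x hq.1 y hq.2 i hi]
          rw [Finset.sum_congr rfl this]
          simp
        · simp only [hi, if_false]
          have hsum : ∑ q ∈ V ×ˢ V, (if q.1 i ≠ q.2 i then 1 else 0)
              = ((V ×ˢ V).filter fun q => q.1 i ≠ q.2 i).card := by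
            rw [Finset.card_filter]
          rw [hsum]
          set A := V.filter (fun x => x i = true) with hA
          set B := V.filter (fun x => x i = false) with hB
          have hunion : ((V ×ˢ V).filter fun q => q.1 i ≠ q.2 i) = (A ×ˢ B) ∪ (B ×ˢ A) := by
            ext ⟨x, y⟩
            simp only [mem_filter, mem_product, mem_union, hA, hB]
            cases hx : x i <;> cases hy : y i <;> simp [hx, hy] <;> tauto
          have hAB : A.card + B.card = V.card := by
            rw [hA, hB]
            have := Finset.card_filter_add_card_filter_not
              (s := V) (p := fun x => x i = true)
            simpa using this
          have hcard : ((V ×ˢ V).filter fun q => q.1 i ≠ q.2 i).card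
              ≤ A.card * B.card + B.card * A.card := by
            rw [hunion]
            calc _ ≤ (A ×ˢ B).card + (B ×ˢ A).card := Finset.card_union_le _ _
              _ = _ := by rw [Finset.card_product, Finset.card_product]
          have key : 2 * (A.card * B.card + B.card * A.card) ≤ (A.card + B.card) ^ 2 := by
            zify
            nlinarith [sq_nonneg ((A.card : ℤ) - B.card)]
          rw [hAB] at key
          calc 2 * ((V ×ˢ V).filter fun q => q.1 i ≠ q.2 i).card
              ≤ 2 * (A.card * B.card + B.card * A.card) := Nat.mul_le_mul_left 2 hcard
            _ ≤ V.card ^ 2 := key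
    _ = ∑ i ∈ Finset.range n, (if i < ℓ then 0 else V.card ^ 2) :=
        Fin.sum_univ_eq_sum_range (fun j => if j < ℓ then 0 else V.card ^ 2) n
    _ = (n - ℓ) * V.card ^ 2 := by
        rw [Finset.sum_ite, hIco]
        simp [Nat.card_Ico]

lemma lowC {n d : ℕ} (V : Finset (Fin n → Bool)) :
    d * (V.card * V.card - V.card
        - ((V ×ˢ V).filter (fun q => q.1 ≠ q.2 ∧ hammingDist q.1 q.2 < d)).card)
      ≤ ∑ q ∈ V ×ˢ V, hammingDist q.1 q.2 := by
  classical
  set D := (V ×ˢ V).filter (fun q => q.1 ≠ q.2) with hD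
  have hDcard : D.card = V.card * V.card - V.card := by
    have : D = V.offDiag := by
      ext q
      simp [hD, Finset.mem_offDiag, and_assoc]
    rw [this, Finset.offDiag_card]
  have hPD : (V ×ˢ V).filter (fun q => q.1 ≠ q.2 ∧ hammingDist q.1 q.2 < d)
      = D.filter (fun q => hammingDist q.1 q.2 < d) := by
    rw [hD, Finset.filter_filter]
  set F := D.filter (fun q => ¬ hammingDist q.1 q.2 < d) with hF
  have hFcard : (D.filter (fun q => hammingDist q.1 q.2 < d)).card + F.card = D.card :=
    Finset.card_filter_add_card_filter_not _
  have h1 : F.card * d ≤ ∑ q ∈ F, hammingDist q.1 q.2 := by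
    calc F.card * d = ∑ _q ∈ F, d := by rw [Finset.sum_const, smul_eq_mul]
      _ ≤ _ := Finset.sum_le_sum (fun q hq => Nat.le_of_not_lt (mem_filter.mp hq).2)
  have h2 : ∑ q ∈ F, hammingDist q.1 q.2 ≤ ∑ q ∈ V ×ˢ V, hammingDist q.1 q.2 := by
    apply Finset.sum_le_sum_of_subset
    rw [hF, hD]
    exact (Finset.filter_subset _ _).trans (Finset.filter_subset _ _)
  rw [hPD, ← hDcard]
  calc d * (D.card - (D.filter (fun q => hammingDist q.1 q.2 < d)).card)
      = d * F.card := by congr 1; omega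
    _ = F.card * d := mul_comm _ _
    _ ≤ _ := le_trans h1 h2


set_option maxHeartbeats 2000000 in
/-- Claim 2: let `p ∈ (0, 1/4]`, `ε > 0`, and let `ℓ = (1 − 4p + ε/2) n`,
`d = 2pn − εn/8` and `εn/4` be positive integers. If `V ⊆ {0,1}^n` is a set of words all
agreeing on their first `ℓ` coordinates with `|V| ≥ 32p/ε`, then the number of unordered
pairs `{x, x'} ⊆ V` of distinct words at Hamming distance `< d` is at least
`(ε/(64p)) |V|²`; consequently two independent uniform elements of `V` are distinct and at
Hamming distance `< 2pn − εn/8` with probability at least `ε/(64p)`. -/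
theorem consistent_pairs_close
    (n ℓ d : ℕ) (p ε : ℝ)
    (hp0 : 0 < p) (hp1 : p ≤ 1 / 4) (hε : 0 < ε)
    (hℓpos : 0 < ℓ) (hdpos : 0 < d)
    (hℓ : (ℓ : ℝ) = (1 - 4 * p + ε / 2) * n)
    (hd : (d : ℝ) = 2 * p * n - ε * n / 8)
    (hint : ∃ m : ℕ, 0 < m ∧ ε * (n : ℝ) / 4 = m)
    (V : Finset (Fin n → Bool))
    (hagree : ∀ x ∈ V, ∀ y ∈ V, ∀ i : Fin n, i.1 < ℓ → x i = y i)
    (hVcard : 32 * p / ε ≤ (V.card : ℝ)) :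
    (ε / (64 * p)) * (V.card : ℝ) ^ 2 ≤
      (((V.powersetCard 2).filter
          (fun s => ∀ x ∈ s, ∀ y ∈ s, x ≠ y → hammingDist x y < d)).card : ℝ) ∧
    ε / (64 * p) ≤
      (((V ×ˢ V).filter
          (fun q => q.1 ≠ q.2 ∧ hammingDist q.1 q.2 < d)).card : ℝ) / (V.card : ℝ) ^ 2 := by
  classical
  -- basic positivity facts
  have hn : 0 < n := by
    rcases Nat.eq_zero_or_pos n with h | h
    · subst h; simp at hℓ; omega
    · exact h
  have hn' : (0:ℝ) < n := by exact_mod_cast hn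
  have hdr : (1:ℝ) ≤ d := by exact_mod_cast hdpos
  have hε16 : ε < 16 * p := by nlinarith
  -- ℓ ≤ n
  have hln : ℓ ≤ n := by
    by_contra hc
    push_neg at hc
    have hV1 : V.card ≤ 1 := by
      apply Finset.card_le_one.mpr
      intro a ha b hb
      funext i
      exact hagree a ha b hb i (lt_of_lt_of_le i.2 (le_of_lt hc))
    have : (V.card : ℝ) ≤ 1 := by exact_mod_cast hV1
    have h32 : 32 * p / ε ≤ 1 := le_trans hVcard this
    rw [div_le_one hε] at h32
    nlinarith
  set Nr : ℝ := (V.card : ℝ) with hNr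
  have hNpos : (0:ℝ) < Nr := lt_of_lt_of_le (by positivity) hVcard
  have hN32 : 32 * p ≤ ε * Nr := by
    rw [div_le_iff₀ hε] at hVcard
    linarith [hVcard]
  set P := (V ×ˢ V).filter (fun q => q.1 ≠ q.2 ∧ hammingDist q.1 q.2 < d) with hP
  set S := ∑ q ∈ V ×ˢ V, hammingDist q.1 q.2 with hS
  have hB := sumB V hagree
  have hC := lowC (d := d) V
  have hPle : P.card ≤ V.card * V.card - V.card := by
    have : P ⊆ (V ×ˢ V).filter (fun q => q.1 ≠ q.2) := by
      rw [hP]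
      intro q hq
      rw [mem_filter] at hq ⊢
      exact ⟨hq.1, hq.2.1⟩
    have h2 := Finset.card_le_card this
    have h3 : ((V ×ˢ V).filter (fun q => q.1 ≠ q.2)) = V.offDiag := by
      ext q; simp [Finset.mem_offDiag, and_assoc]
    rw [h3, Finset.offDiag_card] at h2
    exact h2
  -- cast to ℝ
  have hVpos : 0 < V.card := by
    have h := hNpos
    rw [hNr] at h
    exact_mod_cast h
  have hNN : V.card ≤ V.card * V.card := Nat.le_mul_of_pos_left _ hVpos
  have hCr : (d:ℝ) * ((Nr * Nr - Nr) - P.card) ≤ S := by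
    have := hC
    have hcast : ((d * (V.card * V.card - V.card - P.card) : ℕ) : ℝ)
        = (d:ℝ) * ((Nr * Nr - Nr) - P.card) := by
      push_cast [Nat.cast_sub hPle, Nat.cast_sub hNN]
      ring
    calc (d:ℝ) * ((Nr * Nr - Nr) - P.card)
        = ((d * (V.card * V.card - V.card - P.card) : ℕ) : ℝ) := hcast.symm
      _ ≤ (S : ℝ) := by exact_mod_cast this
  have hBr : 2 * (S:ℝ) ≤ ((n:ℝ) - ℓ) * Nr ^ 2 := by
    have hcast : (((n - ℓ) * V.card ^ 2 : ℕ) : ℝ) = ((n:ℝ) - ℓ) * Nr ^ 2 := by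
      push_cast [Nat.cast_sub hln]
      ring
    calc 2 * (S:ℝ) = ((2 * S : ℕ) : ℝ) := by push_cast; ring
      _ ≤ (((n - ℓ) * V.card ^ 2 : ℕ) : ℝ) := by exact_mod_cast hB
      _ = _ := hcast
  set E : ℝ := (P.card : ℝ) with hE
  have hE0 : 0 ≤ E := by positivity
  -- combine
  have key1 : ε * n / 8 * Nr ^ 2 ≤ (d:ℝ) * (Nr + E) := by
    rw [hd] at hCr ⊢
    rw [hℓ] at hBr
    linarith [hCr, hBr]
  have key3 : ε * n / 8 * Nr ^ 2 ≤ 2 * p * n * (Nr + E) := by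
    have hdle : (d:ℝ) ≤ 2 * p * n := by rw [hd]; nlinarith
    linarith [key1, mul_nonneg (sub_nonneg.mpr hdle) (by linarith : (0:ℝ) ≤ Nr + E)]
  have key4 : ε * Nr ^ 2 / 8 ≤ 2 * p * (Nr + E) := by
    by_contra hcon
    push_neg at hcon
    linarith [key3, mul_lt_mul_of_pos_left hcon hn']
  have hmain : ε / (32 * p) * Nr ^ 2 ≤ E := by
    rw [div_mul_eq_mul_div, div_le_iff₀ (by positivity : (0:ℝ) < 32 * p)]
    linarith [key4, mul_le_mul_of_nonneg_right hN32 (le_of_lt hNpos)]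
  have h64lt32 : ε / (64 * p) * Nr ^ 2 ≤ ε / (32 * p) * Nr ^ 2 := by
    apply mul_le_mul_of_nonneg_right _ (by positivity)
    rw [div_le_div_iff₀ (by positivity) (by positivity)]
    nlinarith [mul_pos hε hp0]
  constructor
  · have h2U := twoU (d := d) V
    have h2Ur : E ≤ 2 * (((V.powersetCard 2).filter
        (fun s => ∀ x ∈ s, ∀ y ∈ s, x ≠ y → hammingDist x y < d)).card : ℝ) := by
      rw [hE, hP]
      exact_mod_cast h2U
    have heq2 : ε / (32 * p) * Nr ^ 2 = 2 * (ε / (64 * p) * Nr ^ 2) := by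
      have : ε / (32 * p) = 2 * (ε / (64 * p)) := by
        field_simp
        ring
      rw [this]; ring
    linarith [hmain, h2Ur, heq2]
  · rw [le_div_iff₀ (by positivity : (0:ℝ) < Nr ^ 2)]
    linarith [hmain, h64lt32]
end

section
/- Let m and d be positive integers with 2d > m, and let C ⊆ {0,1}^m be a set such that every two distinct elements of C have Hamming distance at least d. Then |C| ≤ 2d/(2d − m) + 1. (Plotkin's bound for binary codes, in the form used in the proof of Claim 2.) -/
open Finset

/-- Plotkin's bound: if `2d > m` and every two distinct elements of `C ⊆ {0,1}^m` are at
Hamming distance at least `d`, then `|C| ≤ 2d/(2d − m) + 1`. -/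
theorem plotkin_bound
    (m d : ℕ) (hm : 0 < m) (hd : 0 < d) (hmd : m < 2 * d)
    (C : Finset (Fin m → Bool))
    (hC : ∀ x ∈ C, ∀ y ∈ C, x ≠ y → d ≤ hammingDist x y) :
    (C.card : ℝ) ≤ (2 * d : ℝ) / ((2 * d : ℝ) - m) + 1 := by
  have hpos : (0:ℝ) < 2 * (d:ℝ) - m := by
    have : (m:ℝ) < 2 * d := by exact_mod_cast hmd
    linarith
  set n := C.card with hn
  -- key counting inequality
  have key : 2 * (d * (n * (n - 1))) ≤ m * (n * n) := by
    set S := ∑ x ∈ C, ∑ y ∈ C, hammingDist x y with hS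
    have h1 : d * (n * (n - 1)) ≤ S := by
      have step1 : ∀ x ∈ C, (n - 1) * d ≤ ∑ y ∈ C.erase x, hammingDist x y := by
        intro x hx
        have : (C.erase x).card • d ≤ ∑ y ∈ C.erase x, hammingDist x y := by
          apply Finset.card_nsmul_le_sum
          intro y hy
          exact hC x hx y (Finset.mem_of_mem_erase hy)
            (fun h => (Finset.ne_of_mem_erase hy) h.symm)
        simpa [Finset.card_erase_of_mem hx, smul_eq_mul] using this
      calc d * (n * (n - 1)) = ∑ _x ∈ C, (n - 1) * d := by
            rw [Finset.sum_const, smul_eq_mul]; ring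
        _ ≤ ∑ x ∈ C, ∑ y ∈ C.erase x, hammingDist x y := Finset.sum_le_sum step1
        _ ≤ S := by
            apply Finset.sum_le_sum
            intro x _
            exact Finset.sum_le_sum_of_subset (Finset.erase_subset x C)
    have hswap : S = ∑ i : Fin m, ∑ x ∈ C, ∑ y ∈ C,
        (if x i ≠ y i then 1 else 0) := by
      rw [hS]
      simp_rw [hammingDist, Finset.card_filter]
      rw [show (∑ x ∈ C, ∑ y ∈ C, ∑ i : Fin m, (if x i ≠ y i then 1 else 0))
          = ∑ x ∈ C, ∑ i : Fin m, ∑ y ∈ C, (if x i ≠ y i then 1 else 0) from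
        Finset.sum_congr rfl fun x _ => Finset.sum_comm]
      exact Finset.sum_comm
    have hcoord : ∀ i : Fin m,
        2 * (∑ x ∈ C, ∑ y ∈ C, (if x i ≠ y i then 1 else 0)) ≤ n * n := by
      intro i
      set a := (C.filter fun x => x i = true).card with ha
      set b := (C.filter fun x => x i = false).card with hb
      have hab : a + b = n := by
        have h0 := Finset.card_filter_add_card_filter_not
          (s := C) (p := fun x => x i = true)
        have hneg : (C.filter fun x => ¬ (x i = true)) = C.filter fun x => x i = false := by
          apply Finset.filter_congr; intro x _; simp
        rw [hneg] at h0
        rw [ha, hb, hn]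
        exact h0
      have hx : ∀ x ∈ C, (∑ y ∈ C, if x i ≠ y i then 1 else 0)
          = if x i = true then b else a := by
        intro x _
        cases hxi : x i with
        | false =>
            simp only [hxi, Bool.false_eq_true, if_false, ha, Finset.card_filter]
            apply Finset.sum_congr rfl
            intro y _
            congr 1
            simp
        | true =>
            simp only [hxi, if_true, hb, Finset.card_filter]
            apply Finset.sum_congr rfl
            intro y _
            congr 1
            simp
      rw [Finset.sum_congr rfl hx]
      have hsplit : (∑ x ∈ C, if x i = true then b else a) = a * b + b * a := by
        rw [Finset.sum_ite, Finset.sum_const, Finset.sum_const, smul_eq_mul, smul_eq_mul]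
        have hbcard : (C.filter fun x => ¬ (x i = true)).card = b := by
          rw [hb]
          congr 1
          apply Finset.filter_congr
          intro x _
          simp
        rw [hbcard, ← ha]
      rw [hsplit, ← hab]
      zify
      nlinarith [sq_nonneg ((a:ℤ) - b)]
    have h2 : 2 * S ≤ m * (n * n) := by
      rw [hswap, Finset.mul_sum]
      calc ∑ i : Fin m, 2 * (∑ x ∈ C, ∑ y ∈ C, (if x i ≠ y i then 1 else 0))
          ≤ ∑ i : Fin m, n * n := Finset.sum_le_sum fun i _ => hcoord i
        _ = m * (n * n) := by simp [Finset.sum_const, mul_comm]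
    calc 2 * (d * (n * (n - 1))) ≤ 2 * S := Nat.mul_le_mul le_rfl h1
      _ ≤ m * (n * n) := h2
  -- conclude over the reals
  rcases Nat.eq_zero_or_pos n with h0 | hnp
  · rw [h0]
    push_cast
    have : (0:ℝ) ≤ 2 * (d:ℝ) / (2 * d - m) := by positivity
    have h2d : (2 * (d:ℕ) : ℝ) = 2 * (d:ℝ) := by push_cast; ring
    nlinarith
  · have hkey : 2 * (d:ℝ) * n * ((n:ℝ) - 1) ≤ m * (n * n) := by
      have hc := (Nat.cast_le (α := ℝ)).mpr key
      have hn1 : ((n - 1 : ℕ) : ℝ) = (n:ℝ) - 1 := by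
        rw [Nat.cast_sub hnp]; simp
      push_cast [hn1] at hc
      linarith
    have hnr : (0:ℝ) < n := by exact_mod_cast hnp
    have hmain : (n:ℝ) * (2 * d - m) ≤ 2 * d := by nlinarith
    have : (n:ℝ) ≤ 2 * d / (2 * d - m) := by
      rw [le_div_iff₀ hpos]; linarith
    linarith
end

section
/- Let R > 0 and 0 < ε < 2R, and let n be such that Rn, (R − ε/2)n and εn/4 are positive. Let (U, V) be a pair of jointly distributed random variables on finite sets 𝒰 and 𝒱 with |𝒰| ≤ 2^n and |𝒱| ≤ 2^{(R − ε/2)n}, and suppose the Shannon entropy (base 2) of U satisfies H(U) ≥ Rn. Then Σ_{v ∈ 𝒱 : H(U | V = v) ≥ εn/4} Pr[V = v] ≥ ε/4; that is, with probability at least ε/4 over v ∼ V, the conditional entropy H(U | V = v) is at least εn/4. (Claim 'entropy1' in the proof of Theorem 2: after Calvin observes the length-ℓ prefix, the conditional message entropy remains large with probability at least ε/4.) -/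
open Finset

/-- The Shannon entropy (base 2) of a finitely supported probability distribution.
(Since `Real.logb 2 0 = 0`, terms with `q a = 0` contribute `0`, so this agrees with the
sum over the support.) -/
noncomputable def entropy2 {α : Type*} [Fintype α] (q : α → ℝ) : ℝ :=
  ∑ a, -(q a * Real.logb 2 (q a))

lemma entropy2_eq {α : Type*} [Fintype α] (q : α → ℝ) :
    entropy2 q = (∑ a, Real.negMulLog (q a)) / Real.log 2 := by
  unfold entropy2
  rw [Finset.sum_div]
  refine Finset.sum_congr rfl fun a _ => ?_
  simp [Real.negMulLog, Real.logb, neg_div, mul_div_assoc]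

lemma sum_negMulLog_le_log_card {α : Type*} [Fintype α] (q : α → ℝ)
    (h0 : ∀ a, 0 ≤ q a) (h1 : ∑ a, q a = 1) :
    ∑ a, Real.negMulLog (q a) ≤ Real.log (Fintype.card α) := by
  classical
  set t : Finset α := univ.filter (fun a => 0 < q a) with ht
  have hzero : ∀ a ∈ univ, a ∉ t → q a = 0 := by
    intro a _ ha
    simp only [ht, mem_filter, mem_univ, true_and, not_lt] at ha
    exact le_antisymm ha (h0 a)
  have hts : ∑ a ∈ t, q a = 1 := by
    rw [← h1]
    exact Finset.sum_subset (subset_univ t) (fun a h1' h2' => hzero a h1' h2')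
  have h2 : ∑ a, Real.negMulLog (q a) = ∑ a ∈ t, Real.negMulLog (q a) :=
    (Finset.sum_subset (subset_univ t) (fun a h1' h2' => by simp [hzero a h1' h2'])).symm
  have jensen := (strictConcaveOn_log_Ioi.concaveOn).le_map_sum
    (t := t) (w := q) (p := fun a => (q a)⁻¹)
    (fun a _ => h0 a) hts
    (fun a ha => by
      have : 0 < q a := (mem_filter.mp ha).2
      exact Set.mem_Ioi.mpr (inv_pos.mpr this))
  have hpt : ∑ a ∈ t, q a • (q a)⁻¹ = (t.card : ℝ) := by
    have h1' : ∀ a ∈ t, q a • (q a)⁻¹ = (1:ℝ) := by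
      intro a ha
      have : q a ≠ 0 := ne_of_gt (mem_filter.mp ha).2
      rw [smul_eq_mul, mul_inv_cancel₀ this]
    rw [Finset.sum_congr rfl h1']
    simp
  have hlhs : ∑ a ∈ t, q a • Real.log (q a)⁻¹ = ∑ a ∈ t, Real.negMulLog (q a) := by
    refine Finset.sum_congr rfl fun a _ => ?_
    rw [smul_eq_mul, Real.log_inv, Real.negMulLog]
    ring
  have hcard : 0 < t.card := by
    rcases Finset.eq_empty_or_nonempty t with h | h
    · rw [h] at hts; simp at hts
    · exact Finset.card_pos.mpr h
  calc ∑ a, Real.negMulLog (q a) = ∑ a ∈ t, q a • Real.log (q a)⁻¹ := by rw [h2, hlhs]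
    _ ≤ Real.log (∑ a ∈ t, q a • (q a)⁻¹) := jensen
    _ = Real.log (t.card : ℝ) := by rw [hpt]
    _ ≤ Real.log (Fintype.card α) := by
        apply Real.log_le_log (by exact_mod_cast hcard)
        exact_mod_cast Finset.card_le_card (subset_univ t)

/-- Claim "entropy1": let `(U, V)` be jointly distributed on finite sets with
`|𝒰| ≤ 2^n`, `|𝒱| ≤ 2^{(R − ε/2)n}` and `H(U) ≥ Rn`. Then, with probability at least
`ε/4` over `v ∼ V`, the conditional entropy `H(U | V = v)` is at least `εn/4`. -/
theorem conditional_entropy_large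
    (R ε : ℝ) (hR : 0 < R) (hε0 : 0 < ε) (hε : ε < 2 * R)
    (n : ℕ)
    (hn1 : 0 < R * (n : ℝ)) (hn2 : 0 < (R - ε / 2) * (n : ℝ)) (hn3 : 0 < ε * (n : ℝ) / 4)
    (𝒰 𝒱 : Type) [Fintype 𝒰] [Fintype 𝒱]
    (hU : (Fintype.card 𝒰 : ℝ) ≤ 2 ^ n)
    (hV : (Fintype.card 𝒱 : ℝ) ≤ 2 ^ ((R - ε / 2) * n))
    (μ : 𝒰 × 𝒱 → ℝ) (hμ_nonneg : ∀ z, 0 ≤ μ z) (hμ_sum : ∑ z, μ z = 1)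
    (hHU : R * n ≤ entropy2 (fun u => ∑ v, μ (u, v))) :
    ε / 4 ≤ ∑ v ∈ univ.filter (fun v : 𝒱 =>
        ε * n / 4 ≤ entropy2 (fun u => μ (u, v) / (∑ u', μ (u', v)))),
      ∑ u, μ (u, v) := by
  classical
  have hlog2 : (0:ℝ) < Real.log 2 := Real.log_pos one_lt_two
  set pV : 𝒱 → ℝ := fun v => ∑ u, μ (u, v) with hpVdef
  set pU : 𝒰 → ℝ := fun u => ∑ v, μ (u, v) with hpUdef
  have hpV0 : ∀ v, 0 ≤ pV v := fun v => Finset.sum_nonneg fun u _ => hμ_nonneg _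
  have hpU0 : ∀ u, 0 ≤ pU u := fun u => Finset.sum_nonneg fun v _ => hμ_nonneg _
  have hsum_pV : ∑ v, pV v = 1 := by
    rw [← hμ_sum]; exact (Fintype.sum_prod_type_right μ).symm
  have hsum_pU : ∑ u, pU u = 1 := by
    rw [← hμ_sum]; exact (Fintype.sum_prod_type μ).symm
  have hμ_le_pV : ∀ u v, μ (u, v) ≤ pV v := fun u v =>
    Finset.single_le_sum (fun u' _ => hμ_nonneg (u', v)) (mem_univ u)
  have hμ_le_pU : ∀ u v, μ (u, v) ≤ pU u := fun u v =>
    Finset.single_le_sum (fun v' _ => hμ_nonneg (u, v')) (mem_univ v)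
  -- Step 1: H(U) ≤ H(U,V)
  have step1 : ∑ u, Real.negMulLog (pU u) ≤ ∑ z : 𝒰 × 𝒱, Real.negMulLog (μ z) := by
    rw [Fintype.sum_prod_type (f := fun z : 𝒰 × 𝒱 => Real.negMulLog (μ z))]
    refine Finset.sum_le_sum fun u _ => ?_
    have h1 : Real.negMulLog (pU u) = ∑ v, μ (u, v) * (- Real.log (pU u)) := by
      rw [← Finset.sum_mul]
      simp only [Real.negMulLog, hpUdef]
      ring
    rw [h1]
    refine Finset.sum_le_sum fun v _ => ?_
    rcases eq_or_lt_of_le (hμ_nonneg (u, v)) with h | h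
    · simp [← h]
    · have hlog : Real.log (μ (u, v)) ≤ Real.log (pU u) :=
        Real.log_le_log h (hμ_le_pU u v)
      have := mul_le_mul_of_nonneg_left (neg_le_neg hlog) (le_of_lt h)
      simpa [Real.negMulLog] using this
  -- Step 2: chain rule
  have step2 : ∑ z : 𝒰 × 𝒱, Real.negMulLog (μ z) =
      ∑ v, Real.negMulLog (pV v) +
      ∑ v, pV v * ∑ u, Real.negMulLog (μ (u, v) / pV v) := by
    rw [Fintype.sum_prod_type_right (f := fun z : 𝒰 × 𝒱 => Real.negMulLog (μ z)), ← Finset.sum_add_distrib]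
    refine Finset.sum_congr rfl fun v _ => ?_
    rcases eq_or_lt_of_le (hpV0 v) with h | h
    · have hz : ∀ u, μ (u, v) = 0 := by
        intro u
        have := (Finset.sum_eq_zero_iff_of_nonneg (fun u _ => hμ_nonneg (u, v))).mp h.symm
        exact this u (mem_univ u)
      simp [hz, ← h]
    · have hne : pV v ≠ 0 := ne_of_gt h
      have hrw : ∀ u, μ (u, v) = pV v * (μ (u, v) / pV v) := fun u => by
        field_simp
      have hconds : ∑ u, μ (u, v) / pV v = 1 := by
        rw [← Finset.sum_div]; exact div_self hne
      calc ∑ u, Real.negMulLog (μ (u, v))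
          = ∑ u, ((μ (u, v) / pV v) * Real.negMulLog (pV v)
              + pV v * Real.negMulLog (μ (u, v) / pV v)) := by
            refine Finset.sum_congr rfl fun u _ => ?_
            conv_lhs => rw [hrw u]
            exact Real.negMulLog_mul _ _
        _ = Real.negMulLog (pV v) + pV v * ∑ u, Real.negMulLog (μ (u, v) / pV v) := by
            rw [Finset.sum_add_distrib, ← Finset.sum_mul, hconds, one_mul,
              ← Finset.mul_sum]
  -- nonemptiness
  have hne𝒰 : Nonempty 𝒰 := by
    by_contra h
    rw [not_nonempty_iff] at h
    have := hsum_pU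
    simp [Finset.univ_eq_empty] at this
  have hne𝒱 : Nonempty 𝒱 := by
    by_contra h
    rw [not_nonempty_iff] at h
    have := hsum_pV
    simp [Finset.univ_eq_empty] at this
  -- Step 3: H(V) ≤ (R - ε/2) n log 2
  have step3 : ∑ v, Real.negMulLog (pV v) ≤ (R - ε / 2) * n * Real.log 2 := by
    calc ∑ v, Real.negMulLog (pV v) ≤ Real.log (Fintype.card 𝒱) :=
          sum_negMulLog_le_log_card pV hpV0 hsum_pV
      _ ≤ Real.log ((2:ℝ) ^ ((R - ε / 2) * n)) := by
          apply Real.log_le_log _ hV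
          exact_mod_cast Fintype.card_pos
      _ = (R - ε / 2) * n * Real.log 2 := Real.log_rpow two_pos _
  -- Step 4: each conditional entropy is at most n log 2
  have step4 : ∀ v, ∑ u, Real.negMulLog (μ (u, v) / pV v) ≤ n * Real.log 2 := by
    intro v
    have hnlog : (0:ℝ) ≤ n * Real.log 2 := by positivity
    rcases eq_or_lt_of_le (hpV0 v) with h | h
    · have hz : ∀ u, μ (u, v) = 0 := by
        intro u
        have := (Finset.sum_eq_zero_iff_of_nonneg (fun u _ => hμ_nonneg (u, v))).mp h.symm
        exact this u (mem_univ u)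
      simp only [hz, zero_div, Real.negMulLog_zero, Finset.sum_const_zero]
      exact hnlog
    · have hne : pV v ≠ 0 := ne_of_gt h
      have hconds : ∑ u, μ (u, v) / pV v = 1 := by
        rw [← Finset.sum_div]; exact div_self hne
      calc ∑ u, Real.negMulLog (μ (u, v) / pV v) ≤ Real.log (Fintype.card 𝒰) :=
            sum_negMulLog_le_log_card _ (fun u => div_nonneg (hμ_nonneg _) (hpV0 v)) hconds
        _ ≤ Real.log ((2:ℝ) ^ n) := by
            apply Real.log_le_log _ hU
            exact_mod_cast Fintype.card_pos
        _ = n * Real.log 2 := by rw [Real.log_pow]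
  -- key lower bound
  have hHU' : R * n * Real.log 2 ≤ ∑ u, Real.negMulLog (pU u) := by
    rw [entropy2_eq] at hHU
    calc R * n * Real.log 2 ≤ ((∑ u, Real.negMulLog (pU u)) / Real.log 2) * Real.log 2 :=
          mul_le_mul_of_nonneg_right hHU (le_of_lt hlog2)
      _ = ∑ u, Real.negMulLog (pU u) := div_mul_cancel₀ _ (ne_of_gt hlog2)
  have key : ε * n / 2 * Real.log 2 ≤ ∑ v, pV v * ∑ u, Real.negMulLog (μ (u, v) / pV v) := by
    have h1 : ∑ v, pV v * ∑ u, Real.negMulLog (μ (u, v) / pV v)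
        = (∑ z : 𝒰 × 𝒱, Real.negMulLog (μ z)) - ∑ v, Real.negMulLog (pV v) := by
      rw [step2]; ring
    rw [h1]
    nlinarith [step1, step3, hHU']
  -- split the sum over the filter
  set S : Finset 𝒱 := univ.filter (fun v : 𝒱 =>
      ε * n / 4 ≤ entropy2 (fun u => μ (u, v) / (∑ u', μ (u', v)))) with hS
  have hsplit : ∑ v, pV v * ∑ u, Real.negMulLog (μ (u, v) / pV v)
      = ∑ v ∈ S, pV v * ∑ u, Real.negMulLog (μ (u, v) / pV v)
      + ∑ v ∈ univ.filter (fun v => ¬ (ε * n / 4 ≤ entropy2 (fun u => μ (u, v) / (∑ u', μ (u', v))))),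
          pV v * ∑ u, Real.negMulLog (μ (u, v) / pV v) :=
    (Finset.sum_filter_add_sum_filter_not univ _ _).symm
  have hSbound : ∑ v ∈ S, pV v * ∑ u, Real.negMulLog (μ (u, v) / pV v)
      ≤ (∑ v ∈ S, pV v) * (n * Real.log 2) := by
    rw [Finset.sum_mul]
    exact Finset.sum_le_sum fun v _ => mul_le_mul_of_nonneg_left (step4 v) (hpV0 v)
  have hnotSbound : ∑ v ∈ univ.filter (fun v => ¬ (ε * n / 4 ≤ entropy2 (fun u => μ (u, v) / (∑ u', μ (u', v))))),
      pV v * ∑ u, Real.negMulLog (μ (u, v) / pV v) ≤ ε * n / 4 * Real.log 2 := by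
    have hstep : ∀ v ∈ univ.filter (fun v => ¬ (ε * n / 4 ≤ entropy2 (fun u => μ (u, v) / (∑ u', μ (u', v))))),
        pV v * ∑ u, Real.negMulLog (μ (u, v) / pV v) ≤ pV v * (ε * n / 4 * Real.log 2) := by
      intro v hv
      rw [mem_filter] at hv
      have hlt : entropy2 (fun u => μ (u, v) / (∑ u', μ (u', v))) < ε * n / 4 :=
        lt_of_not_ge hv.2
      rw [entropy2_eq] at hlt
      have : ∑ u, Real.negMulLog (μ (u, v) / pV v) < ε * n / 4 * Real.log 2 :=
        (div_lt_iff₀ hlog2).mp hlt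
      exact mul_le_mul_of_nonneg_left this.le (hpV0 v)
    calc _ ≤ ∑ v ∈ univ.filter (fun v => ¬ (ε * n / 4 ≤ entropy2 (fun u => μ (u, v) / (∑ u', μ (u', v))))),
          pV v * (ε * n / 4 * Real.log 2) := Finset.sum_le_sum hstep
      _ = (∑ v ∈ univ.filter (fun v => ¬ (ε * n / 4 ≤ entropy2 (fun u => μ (u, v) / (∑ u', μ (u', v))))),
          pV v) * (ε * n / 4 * Real.log 2) := by rw [Finset.sum_mul]
      _ ≤ 1 * (ε * n / 4 * Real.log 2) := by
          apply mul_le_mul_of_nonneg_right _ (by positivity)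
          rw [← hsum_pV]
          exact Finset.sum_le_sum_of_subset_of_nonneg (Finset.filter_subset _ _)
            (fun v _ _ => hpV0 v)
      _ = ε * n / 4 * Real.log 2 := one_mul _
  -- combine
  have hn : (0:ℝ) < n := by
    rcases Nat.eq_zero_or_pos n with h | h
    · rw [h] at hn1; simp at hn1
    · exact_mod_cast h
  have hfinal : ε / 4 * ((n:ℝ) * Real.log 2) ≤ (∑ v ∈ S, pV v) * ((n:ℝ) * Real.log 2) := by
    nlinarith [key, hsplit, hSbound, hnotSbound]
  have hpos : (0:ℝ) < (n:ℝ) * Real.log 2 := by positivity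
  exact le_of_mul_le_mul_right hfinal hpos
end
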